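/- arXiv:1711.11226 — 6 statements merged into one kernel-verified Lean document; each statement's English description precedes it below -/
import Mathlib

section
/- Let c > 0, 0 ≤ m < 1, β > 1 − m and set a := β + m − 1. Then the derivative u₀′ of the profile u₀(z) = (1 + (a/c²) e^{−c z})^{−1/a} is square-integrable on ℝ and its squared L² norm is ∫_ℝ (u₀′(z))² dz = c / (2(β + m + 1)). -/
/-!
The profile solves the Bernoulli (Richards) equation `u' = (c/a) (u - u^(a+1))`, so
`(u')² = u' · (c/a) (u - u^(a+1))` is the derivative of `P(u)` with
`P(s) = (c/a) (s²/2 - s^(a+2)/(a+2))`. As `u` tends to `0` at `-∞` and to `1` at `+∞`, the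
nonnegative function `(u')²` is integrable, with integral `P(1) - P(0) = c / (2 (a + 2))`.
-/

open Real Filter MeasureTheory Set Topology

theorem integrableOn_Iic_deriv_of_nonneg' {g g' : ℝ → ℝ} {a l : ℝ}
    (hderiv : ∀ x ∈ Iic a, HasDerivAt g (g' x) x) (g'pos : ∀ x ∈ Iio a, 0 ≤ g' x)
    (hg : Tendsto g atBot (𝓝 l)) : IntegrableOn g' (Iic a) := by
  have hneg : IntegrableOn (g' ∘ Neg.neg) (Ioi (-a)) := by
    refine integrableOn_Ioi_deriv_of_nonneg' (g := fun x => -g (-x)) (l := -l)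
      (fun x hx => ?_) (fun x hx => g'pos _ (neg_lt.mp hx : -x < a)) ?_
    · simpa using ((hderiv (-x) (neg_le.mp hx : -x ≤ a)).comp x (hasDerivAt_neg x)).fun_neg
    · exact (hg.comp tendsto_neg_atTop_atBot).neg
  rw [integrableOn_Iic_iff_integrableOn_Iio, ← Measure.map_neg_eq_self (volume : Measure ℝ),
    measurableEmbedding_neg.integrableOn_map_iff]
  simpa using hneg

theorem integrable_deriv_of_nonneg {g g' : ℝ → ℝ} {l l' : ℝ}
    (hderiv : ∀ x, HasDerivAt g (g' x) x) (g'pos : ∀ x, 0 ≤ g' x)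
    (hbot : Tendsto g atBot (𝓝 l)) (htop : Tendsto g atTop (𝓝 l')) : Integrable g' := by
  rw [← integrableOn_univ, ← Iic_union_Ioi (a := 0)]
  exact (integrableOn_Iic_deriv_of_nonneg' (fun x _ => hderiv x) (fun x _ => g'pos x) hbot).union
    (integrableOn_Ioi_deriv_of_nonneg' (fun x _ => hderiv x) (fun x _ => g'pos x) htop)

noncomputable def richardsPotential (r a s : ℝ) : ℝ := r * (s ^ 2 / 2 - s ^ (a + 2) / (a + 2))

theorem continuous_richardsPotential {r a : ℝ} (ha : 0 ≤ a + 2) :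
    Continuous (richardsPotential r a) := by
  have := continuous_rpow_const ha
  unfold richardsPotential
  fun_prop

theorem HasDerivAt.richardsPotential_comp {u : ℝ → ℝ} {r a z : ℝ} (ha : a + 2 ≠ 0)
    (hu0 : u z ≠ 0) (hu : HasDerivAt u (r * (u z - u z ^ (a + 1))) z) :
    HasDerivAt (fun z => richardsPotential r a (u z)) ((r * (u z - u z ^ (a + 1))) ^ 2) z := by
  have hpow := hu.rpow_const (p := a + 2) (Or.inl hu0)
  rw [show a + 2 - 1 = a + 1 by ring] at hpow
  refine ((((hu.fun_pow 2).div_const 2).fun_sub (hpow.div_const (a + 2))).const_mul r).congr_deriv ?_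
  field_simp
  ring

noncomputable def twProfile (a c z : ℝ) : ℝ := (1 + (a / c ^ 2) * exp (-c * z)) ^ (-(1 / a))

section twProfile

variable {a c : ℝ}

theorem twProfile_base_pos (ha : 0 < a) (z : ℝ) : 0 < 1 + (a / c ^ 2) * exp (-c * z) := by
  positivity

theorem twProfile_pos (ha : 0 < a) (z : ℝ) : 0 < twProfile a c z :=
  rpow_pos_of_pos (twProfile_base_pos ha z) _

theorem hasDerivAt_twProfile (ha : 0 < a) (z : ℝ) :
    HasDerivAt (twProfile a c) (c / a * (twProfile a c z - twProfile a c z ^ (a + 1))) z := by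
  set b := 1 + (a / c ^ 2) * exp (-c * z)
  have hb : 0 < b := twProfile_base_pos ha z
  have hpow : twProfile a c z ^ (a + 1) = b ^ (-(1 / a) - 1) := by
    rw [twProfile, ← rpow_mul hb.le]
    congr 1
    field_simp
    ring
  have hself : twProfile a c z = b ^ (-(1 / a) - 1) * b := by
    rw [twProfile, ← rpow_add_one hb.ne']
    congr 1
    ring
  have hbase : HasDerivAt (fun z => 1 + (a / c ^ 2) * exp (-c * z))
      ((a / c ^ 2) * (exp (-c * z) * -c)) z :=
    ((((hasDerivAt_id z).const_mul (-c)).exp).const_mul _).const_add 1 |>.congr_deriv (by simp)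
  refine (hbase.rpow_const (p := -(1 / a)) (Or.inl hb.ne')).congr_deriv ?_
  rw [hpow, hself]
  ring

theorem tendsto_twProfile_atTop (hc : 0 < c) : Tendsto (twProfile a c) atTop (𝓝 1) := by
  have hexp : Tendsto (fun z => exp (-c * z)) atTop (𝓝 0) :=
    tendsto_exp_atBot.comp (tendsto_id.const_mul_atTop_of_neg (neg_lt_zero.mpr hc))
  have := ((hexp.const_mul (a / c ^ 2)).const_add 1).rpow_const (p := -(1 / a))
    (Or.inl (by norm_num))
  rwa [mul_zero, add_zero, one_rpow] at this

theorem tendsto_twProfile_atBot (ha : 0 < a) (hc : 0 < c) :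
    Tendsto (twProfile a c) atBot (𝓝 0) := by
  have hexp : Tendsto (fun z => exp (-c * z)) atBot atTop :=
    tendsto_exp_atTop.comp (tendsto_id.const_mul_atBot_of_neg (neg_lt_zero.mpr hc))
  exact (tendsto_rpow_neg_atTop (one_div_pos.mpr ha)).comp
    (tendsto_atTop_add_const_left _ 1 (hexp.const_mul_atTop (by positivity)))

theorem integrable_deriv_twProfile_sq_and_integral_eq (ha : 0 < a) (hc : 0 < c) :
    Integrable (fun z => deriv (twProfile a c) z ^ 2) ∧
      ∫ z, deriv (twProfile a c) z ^ 2 = c / (2 * (a + 2)) := by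
  have hderiv z := (hasDerivAt_twProfile (c := c) ha z).richardsPotential_comp (by positivity)
    (twProfile_pos ha z).ne'
  have hcont := continuous_richardsPotential (r := c / a) (by positivity : 0 ≤ a + 2)
  have htop := (hcont.tendsto 1).comp (tendsto_twProfile_atTop (a := a) hc)
  have hbot := (hcont.tendsto 0).comp (tendsto_twProfile_atBot ha hc)
  have hint := integrable_deriv_of_nonneg hderiv (fun _ => sq_nonneg _) hbot htop
  simp_rw [(hasDerivAt_twProfile ha _).deriv]
  refine ⟨hint, ?_⟩
  rw [integral_of_hasDerivAt_of_tendsto hderiv hint hbot htop]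
  simp only [richardsPotential, one_rpow, zero_rpow (by positivity : a + 2 ≠ 0)]
  field_simp
  ring

end twProfile

theorem stmt_8_general (c m β : ℝ) (hc : 0 < c) (hβ : β > 1 - m)
    (a : ℝ) (ha : a = β + m - 1)
    (u₀ : ℝ → ℝ)
    (hu : ∀ z : ℝ, u₀ z = (1 + (a / c ^ 2) * Real.exp (-c * z)) ^ (-(1 / a))) :
    Integrable (fun z : ℝ => (deriv u₀ z) ^ 2) ∧
    ∫ z : ℝ, (deriv u₀ z) ^ 2 = c / (2 * (β + m + 1)) := by
  obtain rfl : u₀ = twProfile a c := funext hu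
  have ha0 : 0 < a := by linarith
  rw [show β + m + 1 = a + 2 by linarith]
  exact integrable_deriv_twProfile_sq_and_integral_eq ha0 hc

theorem stmt_8 (c m β : ℝ) (hc : 0 < c) (hm0 : 0 ≤ m) (hm1 : m < 1) (hβ : β > 1 - m)
    (a : ℝ) (ha : a = β + m - 1)
    (u₀ : ℝ → ℝ)
    (hu : ∀ z : ℝ, u₀ z = (1 + (a / c ^ 2) * Real.exp (-c * z)) ^ (-(1 / a))) :
    Integrable (fun z : ℝ => (deriv u₀ z) ^ 2) ∧
    ∫ z : ℝ, (deriv u₀ z) ^ 2 = c / (2 * (β + m + 1)) :=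
  stmt_8_general c m β hc hβ a ha u₀ hu
end

section
/- Let c > 0, 0 ≤ m < 1, β > 1 − m and set a := β + m − 1. Define u_c(z) := (c z + 2) u₀(z) / ( c (c² e^{c z} + a) ) and w_c(z) := −z e^{−c z} u₀(z)^β + β e^{−c z} u₀(z)^{β−1} u_c(z), where u₀(z) = (1 + (a/c²) e^{−c z})^{−1/a}. Then both u_c and w_c belong to L²(ℝ); i.e., the generalised eigenfunction (u_c, w_c) at λ = 0 is square-integrable when the consumption is constant or sublinear. -/
/-!
Both functions are continuous, so it suffices that they decay exponentially, up to a linear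
factor, at `±∞`. Write `u_c = g u₀` with `g = ∂_c log u₀ = (cz + 2) / (c (c² e^{cz} + a))` and
`w_c = e^{-cz} u₀^β (-z + β g)`. Then `g` grows at most linearly, `g = O(z e^{-cz})` at `+∞`,
`u₀ ≤ 1` and `u₀ ≤ (a/c²)^{-1/a} e^{cz/a}`. Hence both functions are `O(z e^{-cz})` at `+∞`,
while at `-∞` we get `u_c = O(z e^{cz/a})` and `w_c = O(z e^{c(β-a)z/a})`, with `β - a = 1 - m > 0`.
-/

open Real Filter MeasureTheory Asymptotics Set

theorem memLp_two_of_isBigO_exp {f : ℝ → ℝ} (hf : Continuous f) {r r' : ℝ} (hr : 0 < r)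
    (hr' : 0 < r') (hbot : f =O[atBot] fun x => exp (r' * x))
    (htop : f =O[atTop] fun x => exp (-r * x)) : MemLp f 2 volume := by
  have hsq {s : ℝ} : (fun x => exp (s * x) ^ 2) = fun x => exp (2 * s * x) := by
    ext x; rw [← exp_nat_mul]; ring_nf
  rw [memLp_two_iff_integrable_sq hf.aestronglyMeasurable]
  refine (hf.pow 2).locallyIntegrable.integrable_of_isBigO_atBot_atTop (hbot.pow 2) ?_
    (htop.pow 2) ?_
  · rw [hsq]
    exact ⟨Iic 0, Iic_mem_atBot 0, integrableOn_exp_mul_Iic (by positivity) 0⟩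
  · rw [hsq]
    exact ⟨Ioi 0, Ioi_mem_atTop 0, integrableOn_exp_mul_Ioi (by linarith) 0⟩

theorem isBigO_id_mul_exp_atTop {r : ℝ} (hr : 0 < r) :
    (fun x : ℝ => x * exp (-r * x)) =O[atTop] fun x => exp (-(r / 2) * x) := by
  refine ((isLittleO_pow_exp_pos_mul_atTop 1 (half_pos hr)).isBigO.mul
    (isBigO_refl (fun x : ℝ => exp (-r * x)) atTop)).congr (fun x => by rw [pow_one]) fun x => ?_
  rw [← exp_add]; ring_nf

theorem isBigO_id_mul_exp_atBot {r : ℝ} (hr : 0 < r) :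
    (fun x : ℝ => x * exp (r * x)) =O[atBot] fun x => exp (r / 2 * x) := by
  refine ((isBigO_id_mul_exp_atTop hr).comp_tendsto tendsto_neg_atBot_atTop).neg_left.congr
    (fun x => ?_) fun x => ?_ <;> simp

theorem memLp_two_of_isBigO_id_mul_exp {f : ℝ → ℝ} (hf : Continuous f) {r r' : ℝ} (hr : 0 < r)
    (hr' : 0 < r') (hbot : f =O[atBot] fun x => x * exp (r' * x))
    (htop : f =O[atTop] fun x => x * exp (-r * x)) : MemLp f 2 volume :=
  memLp_two_of_isBigO_exp hf (half_pos hr) (half_pos hr')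
    (hbot.trans (isBigO_id_mul_exp_atBot hr')) (htop.trans (isBigO_id_mul_exp_atTop hr))

noncomputable def travellingWaveProfile (a c z : ℝ) : ℝ :=
  (1 + a / c ^ 2 * exp (-c * z)) ^ (-(1 / a))

noncomputable def speedLogDeriv (a c z : ℝ) : ℝ :=
  (c * z + 2) / (c * (c ^ 2 * exp (c * z) + a))

section

variable {a c : ℝ}

theorem travellingWaveProfile_pos (ha : 0 ≤ a) (z : ℝ) : 0 < travellingWaveProfile a c z :=
  rpow_pos_of_pos (by positivity) _

theorem continuous_travellingWaveProfile (ha : 0 ≤ a) : Continuous (travellingWaveProfile a c) :=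
  Continuous.rpow_const (by fun_prop) fun _ => Or.inl (by positivity)

theorem travellingWaveProfile_rpow_le_one (ha : 0 ≤ a) {β : ℝ} (hβ : 0 ≤ β) (z : ℝ) :
    travellingWaveProfile a c z ^ β ≤ 1 :=
  rpow_le_one (travellingWaveProfile_pos ha z).le
    (rpow_le_one_of_one_le_of_nonpos (le_add_of_nonneg_right (by positivity))
      (neg_nonpos.2 (by positivity))) hβ

theorem travellingWaveProfile_le (ha : 0 < a) (hc : c ≠ 0) (z : ℝ) :
    travellingWaveProfile a c z ≤ (a / c ^ 2) ^ (-(1 / a)) * exp (c / a * z) := by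
  calc travellingWaveProfile a c z ≤ (a / c ^ 2 * exp (-c * z)) ^ (-(1 / a)) :=
        rpow_le_rpow_of_nonpos (by positivity) (by linarith) (neg_nonpos.2 (by positivity))
    _ = (a / c ^ 2) ^ (-(1 / a)) * exp (c / a * z) := by
        rw [mul_rpow (by positivity) (exp_pos _).le, ← exp_mul]
        congr 2
        field_simp

theorem isBigO_travellingWaveProfile_rpow_one (ha : 0 ≤ a) {β : ℝ} (hβ : 0 ≤ β) (l : Filter ℝ) :
    (fun z => travellingWaveProfile a c z ^ β) =O[l] fun _ => (1 : ℝ) :=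
  isBigO_of_le l fun z => by
    rw [norm_one, norm_of_nonneg (rpow_nonneg (travellingWaveProfile_pos ha z).le _)]
    exact travellingWaveProfile_rpow_le_one ha hβ z

theorem isBigO_travellingWaveProfile_rpow_exp (ha : 0 < a) (hc : c ≠ 0) {β : ℝ} (hβ : 0 ≤ β)
    (l : Filter ℝ) :
    (fun z => travellingWaveProfile a c z ^ β) =O[l] fun z => exp (c * β / a * z) :=
  isBigO_of_le' (c := ((a / c ^ 2) ^ (-(1 / a))) ^ β) l fun z => by
    have hu := (travellingWaveProfile_pos ha.le (c := c) z).le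
    rw [norm_of_nonneg (rpow_nonneg hu _), norm_of_nonneg (exp_pos _).le]
    calc travellingWaveProfile a c z ^ β
        ≤ ((a / c ^ 2) ^ (-(1 / a)) * exp (c / a * z)) ^ β :=
          rpow_le_rpow hu (travellingWaveProfile_le ha hc z) hβ
      _ = ((a / c ^ 2) ^ (-(1 / a))) ^ β * exp (c * β / a * z) := by
          rw [mul_rpow (by positivity) (exp_pos _).le, ← exp_mul]
          ring_nf

theorem continuous_speedLogDeriv (ha : 0 ≤ a) (hc : 0 < c) : Continuous (speedLogDeriv a c) :=
  Continuous.div (by fun_prop) (by fun_prop) fun _ => by positivity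

theorem isBigO_speedLogDeriv_of_isBigO_inv {l : Filter ℝ} (hl : l ≤ Bornology.cobounded ℝ)
    {g : ℝ → ℝ} (hinv : (fun z => (c * (c ^ 2 * exp (c * z) + a))⁻¹) =O[l] g) :
    speedLogDeriv a c =O[l] fun z => z * g z :=
  ((((isBigO_refl id l).const_mul_left c).add
    ((isLittleO_const_id_cobounded (2 : ℝ)).isBigO.mono hl)).mul hinv).congr_left fun z => by
      simp [speedLogDeriv, div_eq_mul_inv]

theorem isBigO_speedLogDeriv_id (ha : 0 < a) (hc : 0 < c) :
    speedLogDeriv a c =O[Bornology.cobounded ℝ] id := by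
  refine (isBigO_speedLogDeriv_of_isBigO_inv le_rfl (g := fun _ => 1) ?_).congr_right
    fun z => mul_one z
  refine isBigO_of_le' (c := (c * a)⁻¹) _ fun z => ?_
  rw [norm_one, mul_one, norm_inv, norm_of_nonneg (by positivity)]
  gcongr
  nlinarith [exp_pos (c * z)]

theorem isBigO_speedLogDeriv_atTop (ha : 0 ≤ a) (hc : 0 < c) :
    speedLogDeriv a c =O[atTop] fun z => z * exp (-c * z) := by
  refine isBigO_speedLogDeriv_of_isBigO_inv IsOrderBornology.atTop_le_cobounded
    (isBigO_of_le' (c := (c ^ 3)⁻¹) _ fun z => ?_)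
  rw [norm_inv, norm_of_nonneg (by positivity), norm_of_nonneg (exp_pos _).le, neg_mul,
    exp_neg, ← mul_inv, inv_le_inv₀ (by positivity) (by positivity)]
  nlinarith [exp_pos (c * z)]

theorem memLp_speedLogDeriv_mul_travellingWaveProfile (ha : 0 < a) (hc : 0 < c) :
    MemLp (fun z => speedLogDeriv a c z * travellingWaveProfile a c z) 2 volume := by
  have hbot := isBigO_travellingWaveProfile_rpow_exp ha hc.ne' zero_le_one atBot
  have htop := isBigO_travellingWaveProfile_rpow_one ha.le zero_le_one atTop (c := c)
  simp only [rpow_one, mul_one] at hbot htop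
  refine memLp_two_of_isBigO_id_mul_exp
    ((continuous_speedLogDeriv ha.le hc).mul (continuous_travellingWaveProfile ha.le))
    hc (div_pos hc ha)
    (((isBigO_speedLogDeriv_id ha hc).mono IsOrderBornology.atBot_le_cobounded).mul hbot)
    (by simpa using (isBigO_speedLogDeriv_atTop ha.le hc).mul htop)

theorem memLp_exp_mul_travellingWaveProfile_rpow_mul (ha : 0 < a) (hc : 0 < c) {β : ℝ}
    (hβ : a < β) :
    MemLp (fun z => exp (-c * z) * travellingWaveProfile a c z ^ β
      * (-z + β * speedLogDeriv a c z)) 2 volume := by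
  have hlin : (fun z => -z + β * speedLogDeriv a c z) =O[Bornology.cobounded ℝ] id :=
    (isBigO_refl id _).neg_left.add ((isBigO_speedLogDeriv_id ha hc).const_mul_left β)
  have hu := continuous_travellingWaveProfile ha.le (c := c)
  have hg := continuous_speedLogDeriv ha.le hc
  refine memLp_two_of_isBigO_id_mul_exp
    (((by fun_prop : Continuous fun z => exp (-c * z)).mul
      (hu.rpow_const fun _ => Or.inr (by linarith))).mul (by fun_prop))
    hc (r' := c * (β - a) / a) (by have := sub_pos.2 hβ; positivity)
    ((((isBigO_refl (fun z => exp (-c * z)) _).mul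
      (isBigO_travellingWaveProfile_rpow_exp ha hc.ne' (by linarith) _)).mul
      (hlin.mono IsOrderBornology.atBot_le_cobounded)).congr_right fun z => ?_)
    ((((isBigO_refl (fun z => exp (-c * z)) _).mul
      (isBigO_travellingWaveProfile_rpow_one ha.le (by linarith) _)).mul
      (hlin.mono IsOrderBornology.atTop_le_cobounded)).congr_right fun z => ?_)
  · rw [← exp_add, id, mul_comm]; congr 2; field_simp; ring
  · simp [mul_comm]

end

theorem stmt_10_general (c m β : ℝ) (hc : 0 < c) (hm1 : m < 1) (hβ : β > 1 - m)
    (a : ℝ) (ha : a = β + m - 1)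
    (u₀ uc wc : ℝ → ℝ)
    (hu : ∀ z : ℝ, u₀ z = (1 + (a / c ^ 2) * Real.exp (-c * z)) ^ (-(1 / a)))
    (huc : ∀ z : ℝ, uc z = (c * z + 2) * u₀ z / (c * (c ^ 2 * Real.exp (c * z) + a)))
    (hwc : ∀ z : ℝ, wc z = -z * Real.exp (-c * z) * u₀ z ^ β
        + β * Real.exp (-c * z) * u₀ z ^ (β - 1) * uc z) :
    MemLp uc 2 (volume : Measure ℝ) ∧ MemLp wc 2 (volume : Measure ℝ) := by
  have ha₀ : 0 < a := by linarith
  have hu₀ : u₀ = travellingWaveProfile a c := funext hu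
  have huc' : uc = fun z => speedLogDeriv a c z * travellingWaveProfile a c z := by
    ext z
    rw [huc, hu₀, speedLogDeriv, mul_div_right_comm]
  have hwc' : wc = fun z => exp (-c * z) * travellingWaveProfile a c z ^ β
      * (-z + β * speedLogDeriv a c z) := by
    ext z
    have hpos := travellingWaveProfile_pos ha₀.le (c := c) z
    rw [hwc, huc', hu₀, rpow_sub_one hpos.ne']
    field_simp
  rw [huc', hwc']
  exact ⟨memLp_speedLogDeriv_mul_travellingWaveProfile ha₀ hc,
    memLp_exp_mul_travellingWaveProfile_rpow_mul ha₀ hc (by linarith)⟩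

theorem stmt_10 (c m β : ℝ) (hc : 0 < c) (hm0 : 0 ≤ m) (hm1 : m < 1) (hβ : β > 1 - m)
    (a : ℝ) (ha : a = β + m - 1)
    (u₀ uc wc : ℝ → ℝ)
    (hu : ∀ z : ℝ, u₀ z = (1 + (a / c ^ 2) * Real.exp (-c * z)) ^ (-(1 / a)))
    (huc : ∀ z : ℝ, uc z = (c * z + 2) * u₀ z / (c * (c ^ 2 * Real.exp (c * z) + a)))
    (hwc : ∀ z : ℝ, wc z = -z * Real.exp (-c * z) * u₀ z ^ β
        + β * Real.exp (-c * z) * u₀ z ^ (β - 1) * uc z) :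
    MemLp uc 2 (volume : Measure ℝ) ∧ MemLp wc 2 (volume : Measure ℝ) :=
  stmt_10_general c m β hc hm1 hβ a ha u₀ uc wc hu huc hwc
end

section
/- Let c > 0, m = 1 and β > 0, and define u₀(z) = (1 + (β/c²) e^{−c z})^{−1/β}, u_c(z) = (c z + 2) u₀(z) / ( c (c² e^{c z} + β) ) and w_c(z) = −z e^{−c z} u₀(z)^β + β e^{−c z} u₀(z)^{β−1} u_c(z). Then w_c(z) → 2c/β as z → −∞; in particular w_c does not tend to zero at −∞ and w_c is not square-integrable on ℝ, so the generalised eigenfunction at λ = 0 fails to exist in L²(ℝ) in the linear-consumption case m = 1. -/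
/-!
Since `u₀ ^ β = (1 + (β / c²) e^{-cz})⁻¹`, all the real powers cancel and `w_c` has the closed form
`w_c(z) = (2βc - c⁴ z e^{cz}) / (c² e^{cz} + β)²`, which tends to `2βc / β² = 2c / β` as `z → -∞`
because `z e^{cz} → 0`. A function with a nonzero limit at `-∞` is bounded away from zero on a
half-line of infinite measure, so it is not in `L²`.
-/

open Real Filter MeasureTheory Topology

lemma tendsto_mul_exp_const_mul_atBot {c : ℝ} (hc : 0 < c) :
    Tendsto (fun z => z * exp (c * z)) atBot (𝓝 0) := by
  have hcz : Tendsto (fun z => -(c * z)) atBot atTop :=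
    tendsto_neg_atBot_atTop.comp (tendsto_id.const_mul_atBot hc)
  have h := ((tendsto_pow_mul_exp_neg_atTop_nhds_zero 1).comp hcz).const_mul (-c⁻¹)
  rw [mul_zero] at h
  refine h.congr fun z => ?_
  simp only [Function.comp_apply, pow_one, neg_neg]
  field_simp

lemma not_memLp_of_tendsto_atBot {E : Type*} [NormedAddCommGroup E] {f : ℝ → E} {L : E}
    {p : ENNReal} (hf : Tendsto f atBot (𝓝 L)) (hL : L ≠ 0) (hp₀ : p ≠ 0) (hp : p ≠ ⊤) :
    ¬ MemLp f p volume := by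
  intro hfp
  obtain ⟨a, ha⟩ := eventually_atBot.1 <|
    hf.norm.eventually (eventually_gt_nhds (half_lt_self (norm_pos_iff.2 hL)))
  have hconst : MemLp (fun _ : ℝ => ‖L‖ / 2) p (volume.restrict (Set.Iic a)) := by
    refine (hfp.restrict _).mono aestronglyMeasurable_const ?_
    refine (ae_restrict_iff' measurableSet_Iic).2 (Eventually.of_forall fun z hz => ?_)
    rw [norm_of_nonneg (by positivity)]
    exact (ha z hz).le
  rw [memLp_const_iff hp₀ hp, Measure.restrict_apply_univ, volume_Iic] at hconst
  rcases hconst with h | h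
  · exact hL (norm_eq_zero.1 (by linarith))
  · exact lt_irrefl _ h

section Profiles

variable {c β : ℝ}

lemma exp_neg_mul_mul_profile_rpow (hc : c ≠ 0) (hβ : 0 < β) (z : ℝ) :
    exp (-c * z) * ((1 + (β / c ^ 2) * exp (-c * z)) ^ (-(1 / β))) ^ β
      = c ^ 2 / (c ^ 2 * exp (c * z) + β) := by
  have hpos : 0 < 1 + (β / c ^ 2) * exp (-c * z) := by positivity
  have hD : 0 < c ^ 2 * exp (c * z) + β := by positivity
  rw [← rpow_mul hpos.le, show -(1 / β) * β = -1 by field_simp, rpow_neg_one,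
    show -c * z = -(c * z) by ring, exp_neg, eq_div_iff hD.ne']
  field_simp

lemma wc_eq_closedForm (hc : 0 < c) (hβ : 0 < β) {u₀ uc : ℝ → ℝ} {z : ℝ}
    (hu : u₀ z = (1 + (β / c ^ 2) * exp (-c * z)) ^ (-(1 / β)))
    (huc : uc z = (c * z + 2) * u₀ z / (c * (c ^ 2 * exp (c * z) + β))) :
    -z * exp (-c * z) * u₀ z ^ β + β * exp (-c * z) * u₀ z ^ (β - 1) * uc z
      = (2 * β * c - c ^ 4 * (z * exp (c * z))) / (c ^ 2 * exp (c * z) + β) ^ 2 := by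
  have hu₀ : 0 < u₀ z := hu ▸ rpow_pos_of_pos (by positivity) _
  have hD : 0 < c ^ 2 * exp (c * z) + β := by positivity
  have hA := exp_neg_mul_mul_profile_rpow hc.ne' hβ z
  rw [← hu] at hA
  rw [huc, rpow_sub hu₀, rpow_one,
    show -z * exp (-c * z) * u₀ z ^ β
        + β * exp (-c * z) * (u₀ z ^ β / u₀ z)
          * ((c * z + 2) * u₀ z / (c * (c ^ 2 * exp (c * z) + β)))
      = (exp (-c * z) * u₀ z ^ β) * (-z + β * ((c * z + 2) / (c * (c ^ 2 * exp (c * z) + β))))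
      by field_simp,
    hA]
  field_simp
  ring

lemma tendsto_wc_closedForm_atBot (hc : 0 < c) (hβ : 0 < β) :
    Tendsto (fun z => (2 * β * c - c ^ 4 * (z * exp (c * z))) / (c ^ 2 * exp (c * z) + β) ^ 2)
      atBot (𝓝 (2 * c / β)) := by
  have hexp : Tendsto (fun z => exp (c * z)) atBot (𝓝 0) :=
    tendsto_exp_atBot.comp (tendsto_id.const_mul_atBot hc)
  have hnum := (tendsto_mul_exp_const_mul_atBot hc).const_mul (c ^ 4) |>.const_sub (2 * β * c)
  have hden := ((hexp.const_mul (c ^ 2)).add_const β).pow 2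
  rw [mul_zero, sub_zero] at hnum
  rw [mul_zero, zero_add] at hden
  rw [show 2 * c / β = 2 * β * c / β ^ 2 by field_simp]
  exact hnum.div hden (pow_ne_zero 2 hβ.ne')

end Profiles

theorem stmt_11 (c β : ℝ) (hc : 0 < c) (hβ : 0 < β)
    (u₀ uc wc : ℝ → ℝ)
    (hu : ∀ z : ℝ, u₀ z = (1 + (β / c ^ 2) * Real.exp (-c * z)) ^ (-(1 / β)))
    (huc : ∀ z : ℝ, uc z = (c * z + 2) * u₀ z / (c * (c ^ 2 * Real.exp (c * z) + β)))
    (hwc : ∀ z : ℝ, wc z = -z * Real.exp (-c * z) * u₀ z ^ β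
        + β * Real.exp (-c * z) * u₀ z ^ (β - 1) * uc z) :
    Tendsto wc atBot (nhds (2 * c / β)) ∧
    ¬ Tendsto wc atBot (nhds 0) ∧
    ¬ MemLp wc 2 (volume : Measure ℝ) := by
  have hlim : Tendsto wc atBot (𝓝 (2 * c / β)) :=
    (tendsto_wc_closedForm_atBot hc hβ).congr fun z =>
      (hwc z ▸ wc_eq_closedForm hc hβ (hu z) (huc z)).symm
  have hne : 2 * c / β ≠ 0 := by positivity
  exact ⟨hlim, fun h₀ => hne (tendsto_nhds_unique hlim h₀),
    not_memLp_of_tendsto_atBot hlim hne two_ne_zero ENNReal.ofNat_ne_top⟩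
end

section
/- Let ε ≥ 0, c > 0, a > 0, let v : ℝ → ℝ be twice continuously differentiable with v(z) > 0 for all z, and define u(z) := v(z) e^{c z / a}. Then for every z ∈ ℝ, ε u″(z) + c u′(z) − e^{−c z} u(z)^{a+1} = e^{c z / a} ( ε v″(z) + s v′(z) + η v(z) − v(z)^{a+1} ), where s = c(1 + 2ε/a) and η = c²(ε + a)/a². In particular, u solves the travelling-wave equation ε u″ + c u′ − e^{−c z} u^{a+1} = 0 (the first Keller–Segel travelling-wave equation with w = e^{−c z} u^β eliminated and a = β + m − 1) if and only if v solves the Fisher-type equation ε v″ + s v′ + η v − v^{a+1} = 0. -/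
/-!
With `k = c / a` and `u = v e^{k z}` one has `u' = (v' + k v) e^{k z}` and
`u'' = (v'' + 2 k v' + k² v) e^{k z}`, while `e^{-c z} u^{a+1} = e^{k z} v^{a+1}` because
`-c + k (a + 1) = k`. Collecting terms gives `s = c + 2 ε k` and `η = ε k² + c k`, and the
equivalence of the two equations follows since `e^{k z} ≠ 0`.
-/

open Real

theorem deriv_mul_exp_const_mul {f : ℝ → ℝ} (hf : Differentiable ℝ f) (k : ℝ) :
    deriv (fun z => f z * exp (k * z)) = fun z => (deriv f z + k * f z) * exp (k * z) := by
  funext z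
  have hexp : HasDerivAt (fun z => exp (k * z)) (exp (k * z) * k) z :=
    ((hasDerivAt_id z).const_mul k).exp.congr_deriv (by simp)
  exact ((hf z).hasDerivAt.mul hexp).deriv.trans (by ring)

theorem deriv_deriv_mul_exp_const_mul {f : ℝ → ℝ} (hf : ContDiff ℝ 2 f) (k : ℝ) :
    deriv (deriv fun z => f z * exp (k * z)) =
      fun z => (deriv (deriv f) z + 2 * k * deriv f z + k ^ 2 * f z) * exp (k * z) := by
  have hf' : Differentiable ℝ (deriv f) := hf.differentiable_deriv_two
  have hf1 : Differentiable ℝ f := hf.differentiable two_ne_zero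
  rw [deriv_mul_exp_const_mul hf1 k,
    deriv_mul_exp_const_mul (f := fun z => deriv f z + k * f z) (hf'.add (hf1.const_mul k)) k]
  funext z
  rw [deriv_fun_add (hf' z) ((hf1 z).const_mul k), deriv_const_mul _ (hf1 z)]
  ring

theorem mul_exp_rpow {x : ℝ} (hx : 0 ≤ x) (t p : ℝ) : (x * exp t) ^ p = x ^ p * exp (t * p) := by
  rw [mul_rpow hx (exp_nonneg t), exp_mul]

theorem stmt_12_general (ε c a : ℝ) (ha : 0 < a)
    (v : ℝ → ℝ) (hv : ContDiff ℝ 2 v) (hvpos : ∀ z : ℝ, 0 < v z)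
    (u : ℝ → ℝ) (hu : ∀ z : ℝ, u z = v z * Real.exp (c * z / a))
    (s η : ℝ) (hs : s = c * (1 + 2 * ε / a)) (hη : η = c ^ 2 * (ε + a) / a ^ 2) :
    (∀ z : ℝ,
      ε * deriv (deriv u) z + c * deriv u z - Real.exp (-c * z) * u z ^ (a + 1)
        = Real.exp (c * z / a) *
            (ε * deriv (deriv v) z + s * deriv v z + η * v z - v z ^ (a + 1))) ∧
    ((∀ z : ℝ, ε * deriv (deriv u) z + c * deriv u z
        - Real.exp (-c * z) * u z ^ (a + 1) = 0) ↔
     (∀ z : ℝ, ε * deriv (deriv v) z + s * deriv v z + η * v z - v z ^ (a + 1) = 0)) := by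
  have hu' : u = fun z => v z * exp (c / a * z) := funext fun z => by rw [hu, div_mul_eq_mul_div]
  have hpow (z : ℝ) : exp (-c * z) * u z ^ (a + 1) = exp (c / a * z) * v z ^ (a + 1) := by
    have hexponent : -c * z + c / a * z * (a + 1) = c / a * z := by field_simp; ring
    rw [hu', mul_exp_rpow (hvpos z).le, mul_left_comm, ← exp_add, hexponent, mul_comm]
  have identity (z : ℝ) :
      ε * deriv (deriv u) z + c * deriv u z - exp (-c * z) * u z ^ (a + 1)
        = exp (c * z / a) *
            (ε * deriv (deriv v) z + s * deriv v z + η * v z - v z ^ (a + 1)) := by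
    rw [hpow, hu', deriv_deriv_mul_exp_const_mul hv,
      deriv_mul_exp_const_mul (hv.differentiable two_ne_zero), hs, hη, ← div_mul_eq_mul_div]
    field_simp
    ring
  refine ⟨identity, forall_congr' fun z => ?_⟩
  rw [identity, mul_eq_zero, or_iff_right (exp_ne_zero _)]

theorem stmt_12 (ε c a : ℝ) (hε : 0 ≤ ε) (hc : 0 < c) (ha : 0 < a)
    (v : ℝ → ℝ) (hv : ContDiff ℝ 2 v) (hvpos : ∀ z : ℝ, 0 < v z)
    (u : ℝ → ℝ) (hu : ∀ z : ℝ, u z = v z * Real.exp (c * z / a))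
    (s η : ℝ) (hs : s = c * (1 + 2 * ε / a)) (hη : η = c ^ 2 * (ε + a) / a ^ 2) :
    (∀ z : ℝ,
      ε * deriv (deriv u) z + c * deriv u z - Real.exp (-c * z) * u z ^ (a + 1)
        = Real.exp (c * z / a) *
            (ε * deriv (deriv v) z + s * deriv v z + η * v z - v z ^ (a + 1))) ∧
    ((∀ z : ℝ, ε * deriv (deriv u) z + c * deriv u z
        - Real.exp (-c * z) * u z ^ (a + 1) = 0) ↔
     (∀ z : ℝ, ε * deriv (deriv v) z + s * deriv v z + η * v z - v z ^ (a + 1) = 0)) :=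
  stmt_12_general ε c a ha v hv hvpos u hu s η hs hη
end

section
/- Let c > 0 and a > 0 and define v(z) := (e^{c z} + a/c²)^{−1/a} for z ∈ ℝ. Then v is positive, v is a solution of the ε = 0 Fisher-type equation c v′(z) + (c²/a) v(z) − v(z)^{a+1} = 0 for all z ∈ ℝ, v′(z) < 0 for all z (v is a strictly decreasing wavefront), and v satisfies the asymptotic conditions lim_{z→−∞} v(z) = (c²/a)^{1/a} and lim_{z→+∞} v(z) = 0. -/
open Real Filter

theorem stmt_13 (c a : ℝ) (hc : 0 < c) (ha : 0 < a)
    (v : ℝ → ℝ)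
    (hv : ∀ z : ℝ, v z = (Real.exp (c * z) + a / c ^ 2) ^ (-(1 / a))) :
    (∀ z : ℝ, 0 < v z) ∧
    (∀ z : ℝ, c * deriv v z + (c ^ 2 / a) * v z - v z ^ (a + 1) = 0) ∧
    (∀ z : ℝ, deriv v z < 0) ∧
    Tendsto v atBot (nhds ((c ^ 2 / a) ^ (1 / a))) ∧
    Tendsto v atTop (nhds 0) := by
  have hveq : v = fun z => (Real.exp (c * z) + a / c ^ 2) ^ (-(1 / a)) := funext hv
  have hu : ∀ z : ℝ, 0 < Real.exp (c * z) + a / c ^ 2 := fun z => by positivity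
  -- derivative
  have hd : ∀ z : ℝ, HasDerivAt v
      (c * Real.exp (c * z) * (-(1 / a)) * (Real.exp (c * z) + a / c ^ 2) ^ (-(1 / a) - 1)) z := by
    intro z
    have h1 : HasDerivAt (fun z : ℝ => Real.exp (c * z) + a / c ^ 2) (c * Real.exp (c * z)) z := by
      have h0 : HasDerivAt (fun z : ℝ => Real.exp (c * z)) (Real.exp (c * z) * (c * 1)) z :=
        ((hasDerivAt_id z).const_mul c).exp
      simpa [mul_comm] using h0.add_const (a / c ^ 2)
    have h2 := h1.rpow_const (p := -(1 / a)) (Or.inl (hu z).ne')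
    rw [hveq]
    exact h2
  have hderiv : ∀ z : ℝ, deriv v z
      = c * Real.exp (c * z) * (-(1 / a)) * (Real.exp (c * z) + a / c ^ 2) ^ (-(1 / a) - 1) :=
    fun z => (hd z).deriv
  refine ⟨?_, ?_, ?_, ?_, ?_⟩
  · intro z; rw [hv z]; exact Real.rpow_pos_of_pos (hu z) _
  · intro z
    rw [hderiv z, hv z]
    have hupos := hu z
    have key1 : (Real.exp (c * z) + a / c ^ 2) ^ (-(1 / a))
        = (Real.exp (c * z) + a / c ^ 2) * (Real.exp (c * z) + a / c ^ 2) ^ (-(1 / a) - 1) := by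
      have h := Real.rpow_add hupos 1 (-(1 / a) - 1)
      rw [Real.rpow_one] at h
      conv_lhs => rw [show -(1 / a) = 1 + (-(1 / a) - 1) by ring]
      exact h
    have key2 : ((Real.exp (c * z) + a / c ^ 2) ^ (-(1 / a))) ^ (a + 1)
        = (Real.exp (c * z) + a / c ^ 2) ^ (-(1 / a) - 1) := by
      rw [← Real.rpow_mul hupos.le]
      congr 1
      field_simp
      ring
    rw [key2, key1]
    set U := (Real.exp (c * z) + a / c ^ 2) ^ (-(1 / a) - 1) with hU
    have ha' : a ≠ 0 := ha.ne'
    have hc' : c ≠ 0 := hc.ne'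
    field_simp
    ring
  · intro z
    rw [hderiv z]
    have h1 : 0 < (Real.exp (c * z) + a / c ^ 2) ^ (-(1 / a) - 1) :=
      Real.rpow_pos_of_pos (hu z) _
    have h2 : 0 < c * Real.exp (c * z) := by positivity
    have h3 : 0 < c * Real.exp (c * z) * (1 / a) * (Real.exp (c * z) + a / c ^ 2) ^ (-(1 / a) - 1) := by
      have := one_div_pos.mpr ha
      positivity
    nlinarith [h3]
  · have h1 : Tendsto (fun z : ℝ => Real.exp (c * z) + a / c ^ 2) atBot (nhds (a / c ^ 2)) := by
      have h0 : Tendsto (fun z : ℝ => c * z) atBot atBot :=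
        Tendsto.const_mul_atBot hc tendsto_id
      have := (Real.tendsto_exp_atBot).comp h0
      simpa using this.add_const (a / c ^ 2)
    have hpos : 0 < a / c ^ 2 := by positivity
    have h2 : ContinuousAt (fun x : ℝ => x ^ (-(1 / a))) (a / c ^ 2) :=
      Real.continuousAt_rpow_const _ _ (Or.inl hpos.ne')
    have h3 := (h2.tendsto).comp h1
    have heq : (a / c ^ 2) ^ (-(1 / a)) = (c ^ 2 / a) ^ (1 / a) := by
      rw [Real.rpow_neg hpos.le, ← Real.inv_rpow hpos.le, inv_div]
    have h3' : Tendsto v atBot (nhds ((a / c ^ 2) ^ (-(1 / a)))) := by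
      rw [hveq]; exact h3
    rwa [heq] at h3'
  · have h1' : Tendsto (fun z : ℝ => Real.exp (c * z) + a / c ^ 2) atTop atTop := by
      have h0 : Tendsto (fun z : ℝ => c * z) atTop atTop :=
        Tendsto.const_mul_atTop hc tendsto_id
      have := (Real.tendsto_exp_atTop).comp h0
      exact tendsto_atTop_add_const_right _ _ this
    have h2 : Tendsto (fun x : ℝ => x ^ (-(1 / a))) atTop (nhds 0) :=
      tendsto_rpow_neg_atTop (by positivity)
    rw [hveq]
    exact h2.comp h1'
end

section
/- The degree-ten polynomial f(β) = 310 β¹⁰ − 3234 β⁹ + 17112 β⁸ − 49101 β⁷ + 76180 β⁶ − 58398 β⁵ + 10056 β⁴ + 15040 β³ − 9680 β² + 1716 β − 4 has exactly one real root greater than one; that is, there exists a unique real number β_crit with β_crit > 1 and f(β_crit) = 0. -/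
/-!
On `(1, 8/5]` the polynomial is negative. On `[8/5, ∞)` its derivative, expanded in powers
of `β - 8/5`, has only positive coefficients, so the polynomial is strictly increasing there;
as it changes sign on `[8/5, 2]`, it has exactly one zero beyond `1`.
-/

open Set Polynomial

theorem existsUnique_lt_and_eq_zero {f : ℝ → ℝ} {a b c : ℝ} (hab : a < b) (hbc : b ≤ c)
    (hf : ContinuousOn f (Icc b c)) (hneg : ∀ x ∈ Ioc a b, f x < 0)
    (hmono : StrictMonoOn f (Ici b)) (hc : 0 < f c) :
    ∃! x, a < x ∧ f x = 0 := by
  obtain ⟨x, hx, hfx⟩ : ∃ x ∈ Icc b c, f x = 0 :=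
    intermediate_value_Icc hbc hf ⟨(hneg b ⟨hab, le_rfl⟩).le, hc.le⟩
  refine ⟨x, ⟨hab.trans_le hx.1, hfx⟩, fun y ⟨hay, hfy⟩ => ?_⟩
  have hby : b < y := not_le.mp fun hyb => (hneg y ⟨hay, hyb⟩).ne hfy
  exact hmono.injOn (mem_Ici.mpr hby.le) (mem_Ici.mpr hx.1) (hfy.trans hfx.symm)

noncomputable def critPoly : ℝ[X] :=
  310 * X ^ 10 - 3234 * X ^ 9 + 17112 * X ^ 8 - 49101 * X ^ 7 + 76180 * X ^ 6
    - 58398 * X ^ 5 + 10056 * X ^ 4 + 15040 * X ^ 3 - 9680 * X ^ 2 + 1716 * X - 4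

theorem eval_critPoly (x : ℝ) : critPoly.eval x =
    310 * x ^ 10 - 3234 * x ^ 9 + 17112 * x ^ 8 - 49101 * x ^ 7 + 76180 * x ^ 6
      - 58398 * x ^ 5 + 10056 * x ^ 4 + 15040 * x ^ 3 - 9680 * x ^ 2 + 1716 * x - 4 := by
  simp [critPoly]

theorem eval_derivative_critPoly (x : ℝ) : critPoly.derivative.eval x =
    3100 * x ^ 9 - 29106 * x ^ 8 + 136896 * x ^ 7 - 343707 * x ^ 6
      + 457080 * x ^ 5 - 291990 * x ^ 4 + 40224 * x ^ 3 + 45120 * x ^ 2 - 19360 * x + 1716 := by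
  simp only [critPoly, derivative_sub, derivative_mul, derivative_ofNat, zero_mul,
    derivative_X_pow_succ, Nat.cast_ofNat, map_add, map_one, zero_add, Nat.cast_one, pow_one,
    derivative_X, mul_one, sub_zero, eval_add, eval_sub, eval_mul, eval_ofNat, eval_C, eval_one,
    eval_pow, eval_X]
  ring

theorem eval_critPoly_neg {x : ℝ} (hx : x ∈ Ioc 1 (8 / 5)) : critPoly.eval x < 0 := by
  have ha : 0 ≤ x - 1 := by linarith [hx.1]
  have hb : 0 ≤ 8 / 5 - x := by linarith [hx.2]
  rw [eval_critPoly]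
  nlinarith [mul_nonneg ha hb, mul_nonneg (mul_nonneg ha ha) hb,
    mul_nonneg (mul_nonneg hb hb) ha, mul_nonneg (mul_nonneg (mul_nonneg ha ha) ha) hb,
    mul_nonneg (mul_nonneg (mul_nonneg hb hb) hb) ha, sq_nonneg ((x - 1) ^ 2 * (8 / 5 - x)),
    sq_nonneg ((x - 1) * (8 / 5 - x) ^ 2), pow_nonneg ha 4, pow_nonneg hb 4, pow_nonneg ha 5]

theorem eval_derivative_critPoly_pos {x : ℝ} (hx : 8 / 5 ≤ x) :
    0 < critPoly.derivative.eval x := by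
  have ht : 0 ≤ x - 8 / 5 := by linarith
  rw [eval_derivative_critPoly]
  linarith [pow_nonneg ht 2, pow_nonneg ht 3, pow_nonneg ht 4, pow_nonneg ht 5,
    pow_nonneg ht 6, pow_nonneg ht 7, pow_nonneg ht 8, pow_nonneg ht 9]

theorem strictMonoOn_eval_critPoly : StrictMonoOn critPoly.eval (Ici (8 / 5)) := by
  refine strictMonoOn_of_deriv_pos (convex_Ici _) critPoly.continuous.continuousOn ?_
  intro x hx
  rw [interior_Ici] at hx
  rw [Polynomial.deriv]
  exact eval_derivative_critPoly_pos hx.le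

theorem stmt_17 :
    ∃! β : ℝ, β > 1 ∧
      310 * β ^ 10 - 3234 * β ^ 9 + 17112 * β ^ 8 - 49101 * β ^ 7 + 76180 * β ^ 6
        - 58398 * β ^ 5 + 10056 * β ^ 4 + 15040 * β ^ 3 - 9680 * β ^ 2
        + 1716 * β - 4 = 0 := by
  have h := existsUnique_lt_and_eq_zero (by norm_num : (1 : ℝ) < 8 / 5)
    (by norm_num : (8 / 5 : ℝ) ≤ 2) critPoly.continuous.continuousOn
    (fun _ => eval_critPoly_neg) strictMonoOn_eval_critPoly (by rw [eval_critPoly]; norm_num)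
  simpa only [eval_critPoly] using h
end
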